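/- arXiv:1303.3035 — 2 statements merged into one kernel-verified Lean document; each statement's English description precedes it below -/
import Mathlib

section
/- For every τ > 0, the function f_τ(a) = (1/√π)(1 - τ/a²)·∫_a^∞ e^{-t²} dt, defined on [√τ, ∞), attains its maximum at a point c satisfying √τ ≤ c ≤ √(τ+1). -/
open MeasureTheory Real

noncomputable def Etail (a : ℝ) : ℝ := ∫ t in Set.Ioi a, Real.exp (-t ^ 2)

lemma exp_neg_sq_eq : (fun t : ℝ => Real.exp (-t ^ 2)) = fun t => Real.exp (-1 * t ^ 2) := by
  ext t; ring_nf

lemma integrable_exp_neg_sq : Integrable (fun t : ℝ => Real.exp (-t ^ 2)) := by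
  rw [exp_neg_sq_eq]; exact integrable_exp_neg_mul_sq one_pos

lemma integrable_mul_exp_neg_sq : Integrable (fun t : ℝ => t * Real.exp (-t ^ 2)) := by
  have : (fun t : ℝ => t * Real.exp (-t ^ 2)) = fun t => t * Real.exp (-1 * t ^ 2) := by
    ext t; ring_nf
  rw [this]; exact integrable_mul_exp_neg_mul_sq one_pos

lemma Etail_split {a b : ℝ} (hab : a ≤ b) :
    Etail a = (∫ t in Set.Ioc a b, Real.exp (-t ^ 2)) + Etail b := by
  rw [Etail, Etail, ← setIntegral_union (Set.Ioc_disjoint_Ioi le_rfl) measurableSet_Ioi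
    integrable_exp_neg_sq.integrableOn integrable_exp_neg_sq.integrableOn,
    Set.Ioc_union_Ioi_eq_Ioi hab]

lemma Etail_eq (a : ℝ) :
    Etail a = Etail 0 - ∫ t in (0:ℝ)..a, Real.exp (-t ^ 2) := by
  rcases le_or_gt 0 a with h | h
  · rw [Etail_split h, intervalIntegral.integral_of_le h]; ring
  · rw [Etail_split h.le, intervalIntegral.integral_of_ge h.le]; ring

lemma hasDerivAt_Etail (a : ℝ) : HasDerivAt Etail (-Real.exp (-a ^ 2)) a := by
  have h : HasDerivAt (fun u : ℝ => ∫ t in (0:ℝ)..u, Real.exp (-t ^ 2))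
      (Real.exp (-a ^ 2)) a :=
    ((Real.continuous_exp.comp (continuous_pow 2).neg).integral_hasStrictDerivAt 0 a).hasDerivAt
  have h2 := (h.const_sub (Etail 0))
  have heq : Etail = fun a => Etail 0 - ∫ t in (0:ℝ)..a, Real.exp (-t ^ 2) := funext Etail_eq
  rw [heq]
  simpa using h2

lemma integral_mul_exp_tail (a : ℝ) :
    ∫ t in Set.Ioi a, t * Real.exp (-t ^ 2) = Real.exp (-a ^ 2) / 2 := by
  have hderiv : ∀ x ∈ Set.Ici a,
      HasDerivAt (fun t : ℝ => -(Real.exp (-t ^ 2)) / 2) (x * Real.exp (-x ^ 2)) x := by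
    intro x _
    have h1 : HasDerivAt (fun t : ℝ => -t ^ 2) (-(2 * x)) x := by
      simpa using (hasDerivAt_pow 2 x).fun_neg
    have : HasDerivAt (fun t : ℝ => -(Real.exp (-t ^ 2)) / 2)
        (-(Real.exp (-x ^ 2) * (-(2 * x))) / 2) x := (h1.exp.fun_neg).div_const 2
    convert this using 1
    ring
  have htend : Filter.Tendsto (fun t : ℝ => -(Real.exp (-t ^ 2)) / 2)
      Filter.atTop (nhds 0) := by
    have h1 : Filter.Tendsto (fun t : ℝ => -t ^ 2) Filter.atTop Filter.atBot := by
      have h0 : Filter.Tendsto (fun t : ℝ => t ^ 2) Filter.atTop Filter.atTop :=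
        Filter.tendsto_pow_atTop two_ne_zero
      exact Filter.tendsto_neg_atBot_iff.mpr h0
    have h2 : Filter.Tendsto (fun t : ℝ => Real.exp (-t ^ 2)) Filter.atTop (nhds 0) :=
      Real.tendsto_exp_atBot.comp h1
    simpa using (h2.neg).div_const 2
  have := MeasureTheory.integral_Ioi_of_hasDerivAt_of_tendsto' hderiv
    integrable_mul_exp_neg_sq.integrableOn htend
  rw [this]; ring

lemma Etail_le {a : ℝ} (ha : 0 < a) : Etail a ≤ Real.exp (-a ^ 2) / (2 * a) := by
  have h1 : Etail a ≤ ∫ t in Set.Ioi a, a⁻¹ * (t * Real.exp (-t ^ 2)) := by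
    apply setIntegral_mono_on integrable_exp_neg_sq.integrableOn
      (integrable_mul_exp_neg_sq.integrableOn.const_mul _) measurableSet_Ioi
    intro t ht
    have ht' : a ≤ t := le_of_lt ht
    have hexp : 0 < Real.exp (-t ^ 2) := Real.exp_pos _
    have h1t : (1:ℝ) ≤ a⁻¹ * t := by
      rw [← div_eq_inv_mul]
      exact (one_le_div ha).mpr ht'
    nlinarith [hexp, h1t]
  rw [MeasureTheory.integral_const_mul, integral_mul_exp_tail] at h1
  calc Etail a ≤ a⁻¹ * (Real.exp (-a ^ 2) / 2) := h1
    _ = Real.exp (-a ^ 2) / (2 * a) := by field_simp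

lemma hasDerivAt_F (τ : ℝ) {a : ℝ} (ha : 0 < a) :
    HasDerivAt (fun a : ℝ => (1 - τ / a ^ 2) * Etail a)
      (2 * τ / a ^ 3 * Etail a + (1 - τ / a ^ 2) * (-Real.exp (-a ^ 2))) a := by
  have ha2 : (a : ℝ) ^ 2 ≠ 0 := pow_ne_zero _ ha.ne'
  have h1 : HasDerivAt (fun a : ℝ => 1 - τ / a ^ 2) (2 * τ / a ^ 3) a := by
    have hp : HasDerivAt (fun a : ℝ => a ^ 2) (2 * a) a := by
      simpa using hasDerivAt_pow 2 a
    have : HasDerivAt (fun x : ℝ => 1 - τ * (x ^ 2)⁻¹) (-(τ * (-(2 * a) / (a ^ 2) ^ 2))) a :=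
      ((hp.inv ha2).const_mul τ).const_sub 1
    have heq : 1 - τ * (-(2 * a) / (a ^ 2) ^ 2) = 2 * τ / a ^ 3 + 1 := by
      field_simp; ring
    simp only [div_eq_mul_inv]
    convert this using 1
    field_simp
  exact h1.mul (hasDerivAt_Etail a)

lemma F_deriv_neg (τ : ℝ) (hτ : 0 < τ) {a : ℝ} (ha : Real.sqrt (τ + 1) < a) :
    2 * τ / a ^ 3 * Etail a + (1 - τ / a ^ 2) * (-Real.exp (-a ^ 2)) < 0 := by
  have ha0 : 0 < a := lt_of_le_of_lt (Real.sqrt_nonneg _) ha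
  have ha2 : τ + 1 < a ^ 2 := (Real.sqrt_lt' ha0).mp ha
  have hE : Etail a ≤ Real.exp (-a ^ 2) / (2 * a) := Etail_le ha0
  have hexp : 0 < Real.exp (-a ^ 2) := Real.exp_pos _
  have h1 : 2 * τ / a ^ 3 * Etail a ≤ τ / a ^ 4 * Real.exp (-a ^ 2) := by
    have hc : 0 ≤ 2 * τ / a ^ 3 := by positivity
    calc 2 * τ / a ^ 3 * Etail a ≤ 2 * τ / a ^ 3 * (Real.exp (-a ^ 2) / (2 * a)) :=
          mul_le_mul_of_nonneg_left hE hc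
      _ = τ / a ^ 4 * Real.exp (-a ^ 2) := by field_simp
  have h2 : τ / a ^ 4 < 1 - τ / a ^ 2 := by
    rw [← sub_pos]
    have hkey : (1 - τ / a ^ 2) - τ / a ^ 4 = (a ^ 2 * (a ^ 2 - τ) - τ) / a ^ 4 := by
      field_simp
    rw [hkey]
    have hnum : 0 < a ^ 2 * (a ^ 2 - τ) - τ := by nlinarith
    exact div_pos hnum (by positivity)
  nlinarith [mul_lt_mul_of_pos_right h2 hexp]

/-- For every τ > 0, the function f_τ(a) = (1/√π)(1 - τ/a²)·∫_a^∞ e^{-t²} dt on [√τ, ∞)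
attains its maximum at a point c with √τ ≤ c ≤ √(τ+1). -/
theorem stmt0 (τ : ℝ) (hτ : 0 < τ) :
    ∃ c ∈ Set.Icc (Real.sqrt τ) (Real.sqrt (τ + 1)),
      ∀ a ∈ Set.Ici (Real.sqrt τ),
        (1 / Real.sqrt π) * (1 - τ / a ^ 2) * (∫ t in Set.Ioi a, Real.exp (-t ^ 2)) ≤
          (1 / Real.sqrt π) * (1 - τ / c ^ 2) * (∫ t in Set.Ioi c, Real.exp (-t ^ 2)) := by
  set s0 := Real.sqrt τ with hs0
  set s1 := Real.sqrt (τ + 1) with hs1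
  have hs0pos : 0 < s0 := Real.sqrt_pos.mpr hτ
  have hs01 : s0 ≤ s1 := Real.sqrt_le_sqrt (by linarith)
  have hs1pos : 0 < s1 := lt_of_lt_of_le hs0pos hs01
  set F : ℝ → ℝ := fun a => (1 - τ / a ^ 2) * Etail a with hF
  have hFderiv : ∀ a : ℝ, 0 < a → HasDerivAt F
      (2 * τ / a ^ 3 * Etail a + (1 - τ / a ^ 2) * (-Real.exp (-a ^ 2))) a :=
    fun a ha => hasDerivAt_F τ ha
  have hFcontOn : ∀ s : Set ℝ, s ⊆ Set.Ioi 0 → ContinuousOn F s := by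
    intro s hs a ha
    exact ((hFderiv a (hs ha)).continuousAt).continuousWithinAt
  -- maximum over the compact interval
  obtain ⟨c, hc, hmax⟩ := (isCompact_Icc).exists_isMaxOn (Set.nonempty_Icc.mpr hs01)
    (hFcontOn _ (fun x hx => lt_of_lt_of_le hs0pos hx.1))
  -- F is antitone on [s1, ∞)
  have hanti : AntitoneOn F (Set.Ici s1) := by
    apply StrictAntiOn.antitoneOn
    apply strictAntiOn_of_deriv_neg (convex_Ici s1)
      (hFcontOn _ (fun x hx => lt_of_lt_of_le hs1pos hx))
    intro x hx
    rw [interior_Ici] at hx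
    rw [(hFderiv x (lt_trans hs1pos hx)).deriv]
    exact F_deriv_neg τ hτ hx
  refine ⟨c, hc, fun a ha => ?_⟩
  have key : F a ≤ F c := by
    rcases le_or_gt a s1 with h | h
    · exact hmax ⟨ha, h⟩
    · calc F a ≤ F s1 := hanti (Set.self_mem_Ici) (le_of_lt h) (le_of_lt h)
        _ ≤ F c := hmax ⟨hs01, le_rfl⟩
  have hpi : 0 ≤ 1 / Real.sqrt π := by positivity
  calc (1 / Real.sqrt π) * (1 - τ / a ^ 2) * (∫ t in Set.Ioi a, Real.exp (-t ^ 2))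
      = (1 / Real.sqrt π) * F a := by rw [hF]; simp [Etail, mul_assoc]
    _ ≤ (1 / Real.sqrt π) * F c := mul_le_mul_of_nonneg_left key hpi
    _ = (1 / Real.sqrt π) * (1 - τ / c ^ 2) * (∫ t in Set.Ioi c, Real.exp (-t ^ 2)) := by
        rw [hF]; simp [Etail, mul_assoc]
end

section
/- Let n be a positive integer, 0 ≤ i ≤ n−1, and define Q_i(x,y) = (‖x‖² − 2)² + ‖y‖² − 1 for (x,y) ∈ ℝ^{i+1} × ℝ^{n−1−i}, with U = {(x,y) : ‖x‖² + ‖y‖² < 5}. Then for every (x,y) ∈ ℝ^{i+1} × ℝ^{n−1−i} and every 0 < δ < 1/2, if |Q_i(x,y)| < δ then the gradient satisfies ‖∇Q_i(x,y)‖² > 4(1 − δ). -/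
open Real

/-- For Q_i(x,y) = (‖x‖² − 2)² + ‖y‖² − 1 with (x,y) ∈ ℝ^{i+1} × ℝ^{n−1−i}:
for every 0 < δ < 1/2, if |Q_i(x,y)| < δ then
‖∇Q_i(x,y)‖² = 16‖x‖²(‖x‖²−2)² + 4‖y‖² > 4(1 − δ). -/
theorem stmt9 (n i : ℕ) (hn : 0 < n) (hi : i ≤ n - 1)
    (x : EuclideanSpace ℝ (Fin (i + 1))) (y : EuclideanSpace ℝ (Fin (n - 1 - i)))
    (δ : ℝ) (hδ : 0 < δ) (hδ2 : δ < 1 / 2)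
    (h : |(‖x‖ ^ 2 - 2) ^ 2 + ‖y‖ ^ 2 - 1| < δ) :
    4 * (1 - δ) < 16 * ‖x‖ ^ 2 * (‖x‖ ^ 2 - 2) ^ 2 + 4 * ‖y‖ ^ 2 := by
  set a := ‖x‖ ^ 2 with ha
  set b := ‖y‖ ^ 2 with hb
  have ha0 : 0 ≤ a := by positivity
  have hb0 : 0 ≤ b := by positivity
  obtain ⟨h1, h2⟩ := abs_lt.mp h
  nlinarith [sq_nonneg (a - 2), mul_nonneg ha0 (sq_nonneg (a - 2)), sq_nonneg (a - 1), sq_nonneg (a - 3), mul_nonneg hb0 ha0]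
end
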